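/- Let U₁, U₂, V be pairwise disjoint finite sets. Suppose d : pairs → ℝ_{>0}, δ₁ : U₁ → ℝ≥0, δ₂ : U₂ → ℝ≥0, and e₁, e₂ ≥ 0 are such that for all x ∈ U₁, y ∈ U₂: d(x,y) = δ₁(x) + e₁ + e₂ + δ₂(y). Define, for a pair (p,q) with offset δ(p): a(p,q) = 4/d(p,q)² and b-contribution −4/d(p,q) + 8δ(p)/d(p,q)². Then Σ_{x∈U₁,z∈V}(−4/d(x,z) + 8(δ₁(x)+e₁)/d(x,z)²) + Σ_{y∈U₂,z∈V}(−4/d(y,z) + 8(δ₂(y)+e₂)/d(y,z)²) = [Σ_{x∈U₁,y∈U₂∪V}(−4/d(x,y) + 8δ₁(x)/d(x,y)²)] + [Σ_{y∈U₂,x∈U₁∪V}(−4/d(y,x) + 8δ₂(y)/d(y,x)²)] + 2e₁·Σ_{x∈U₁,y∈U₂∪V} 4/d(x,y)² + 2e₂·Σ_{y∈U₂,x∈U₁∪V} 4/d(y,x)². -/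
import Mathlib


theorem stmt_13 {α : Type*} [DecidableEq α] (U₁ U₂ V : Finset α)
    (h12 : Disjoint U₁ U₂) (h1V : Disjoint U₁ V) (h2V : Disjoint U₂ V)
    (d : α → α → ℝ) (hdpos : ∀ x y, x ≠ y → 0 < d x y)
    (hdsymm : ∀ x y, d x y = d y x)
    (δ₁ δ₂ : α → ℝ) (hδ₁ : ∀ x ∈ U₁, 0 ≤ δ₁ x) (hδ₂ : ∀ y ∈ U₂, 0 ≤ δ₂ y)
    (e₁ e₂ : ℝ) (he₁ : 0 ≤ e₁) (he₂ : 0 ≤ e₂)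
    (hcross : ∀ x ∈ U₁, ∀ y ∈ U₂, d x y = δ₁ x + e₁ + e₂ + δ₂ y) :
    (∑ x ∈ U₁, ∑ z ∈ V, (-4 / d x z + 8 * (δ₁ x + e₁) / d x z ^ 2)) +
      (∑ y ∈ U₂, ∑ z ∈ V, (-4 / d y z + 8 * (δ₂ y + e₂) / d y z ^ 2)) =
    (∑ x ∈ U₁, ∑ y ∈ U₂ ∪ V, (-4 / d x y + 8 * δ₁ x / d x y ^ 2)) +
      (∑ y ∈ U₂, ∑ x ∈ U₁ ∪ V, (-4 / d y x + 8 * δ₂ y / d y x ^ 2)) +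
      2 * e₁ * ∑ x ∈ U₁, ∑ y ∈ U₂ ∪ V, 4 / d x y ^ 2 +
      2 * e₂ * ∑ y ∈ U₂, ∑ x ∈ U₁ ∪ V, 4 / d y x ^ 2 := by
  have h0 : ∑ x ∈ U₁, ∑ y ∈ U₂,
      ((-4 / d x y + 8 * δ₁ x / d x y ^ 2) + (-4 / d y x + 8 * δ₂ y / d y x ^ 2)
        + 2 * e₁ * (4 / d x y ^ 2) + 2 * e₂ * (4 / d y x ^ 2)) = 0 := by
    refine Finset.sum_eq_zero fun x hx => Finset.sum_eq_zero fun y hy => ?_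
    have hxy : x ≠ y := fun h => (Finset.disjoint_left.mp h12 hx) (h ▸ hy)
    have hne : d x y ≠ 0 := (hdpos x y hxy).ne'
    have hD := hcross x hx y hy
    rw [← hdsymm x y]
    field_simp
    rw [hD]
    ring
  simp only [Finset.sum_add_distrib, ← Finset.mul_sum] at h0
  have c1 : ∑ y ∈ U₂, ∑ x ∈ U₁, (-4 / d y x + 8 * δ₂ y / d y x ^ 2)
      = ∑ x ∈ U₁, ∑ y ∈ U₂, (-4 / d y x + 8 * δ₂ y / d y x ^ 2) := Finset.sum_comm
  have c2 : ∑ y ∈ U₂, ∑ x ∈ U₁, 4 / d y x ^ 2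
      = ∑ x ∈ U₁, ∑ y ∈ U₂, 4 / d y x ^ 2 := Finset.sum_comm
  have hL1 : ∑ x ∈ U₁, ∑ z ∈ V, (-4 / d x z + 8 * (δ₁ x + e₁) / d x z ^ 2)
      = (∑ x ∈ U₁, ∑ z ∈ V, (-4 / d x z + 8 * δ₁ x / d x z ^ 2))
        + 2 * e₁ * ∑ x ∈ U₁, ∑ z ∈ V, 4 / d x z ^ 2 := by
    rw [Finset.mul_sum, ← Finset.sum_add_distrib]
    refine Finset.sum_congr rfl fun x _ => ?_
    rw [Finset.mul_sum, ← Finset.sum_add_distrib]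
    refine Finset.sum_congr rfl fun z _ => ?_
    rw [mul_add, add_div]
    ring
  have hL2 : ∑ y ∈ U₂, ∑ z ∈ V, (-4 / d y z + 8 * (δ₂ y + e₂) / d y z ^ 2)
      = (∑ y ∈ U₂, ∑ z ∈ V, (-4 / d y z + 8 * δ₂ y / d y z ^ 2))
        + 2 * e₂ * ∑ y ∈ U₂, ∑ z ∈ V, 4 / d y z ^ 2 := by
    rw [Finset.mul_sum, ← Finset.sum_add_distrib]
    refine Finset.sum_congr rfl fun y _ => ?_
    rw [Finset.mul_sum, ← Finset.sum_add_distrib]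
    refine Finset.sum_congr rfl fun z _ => ?_
    rw [mul_add, add_div]
    ring
  simp only [Finset.sum_add_distrib] at hL1 hL2 c1 c2
  simp only [Finset.sum_union h2V, Finset.sum_union h1V, Finset.sum_add_distrib]
  linear_combination hL1 + hL2 - h0 - c1 - 2 * e₂ * c2
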